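/- arXiv:2307.14938 — 7 statements merged into one kernel-verified Lean document; each statement's English description precedes it below -/
import Mathlib

section
/- Let g : ℝⁿ → ℝᵐ be continuously differentiable, and suppose for every z in the box [x, x̂] the Jacobian satisfies J̲ ≤ Dg(z) ≤ J̄ entrywise. Then for every z ∈ [x, x̂]: g(x) + [J̲]⁻(x̂ − x) ≤ g(z) ≤ g(x) + [J̄]⁺(x̂ − x), where [B]⁺ = max(B, 0) and [B]⁻ = min(B, 0) entrywise. In particular, the function G(x, x̂) = ([J̲]⁻(x̂ − x) + g(x), [J̄]⁺(x̂ − x) + g(x)) is an inclusion function for g on [x, x̂]. -/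
/-!
By the mean value theorem, applied to each coordinate `g i` along the segment from `x` to `z`,
`g z i - g x i = (Dg(w) (z - x)) i` for some `w` in the box. Since `0 ≤ z - x ≤ xu - x`, each term
`Dg(w)ᵢⱼ (z - x)ⱼ` lies between `[Jlo]⁻ᵢⱼ (xu - x)ⱼ` and `[Jhi]⁺ᵢⱼ (xu - x)ⱼ`.
-/

/-- Entrywise nonnegative part of a matrix. -/
def mpos {m n : ℕ} (A : Matrix (Fin m) (Fin n) ℝ) : Matrix (Fin m) (Fin n) ℝ :=
  fun i j => max (A i j) 0

/-- Entrywise nonpositive part of a matrix. -/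
def mneg {m n : ℕ} (A : Matrix (Fin m) (Fin n) ℝ) : Matrix (Fin m) (Fin n) ℝ :=
  fun i j => min (A i j) 0

open Set Matrix

section Jacobian

variable {ι κ : Type*} [Fintype κ] [DecidableEq κ]

noncomputable def jacobianMatrix (g : (κ → ℝ) → ι → ℝ) (z : κ → ℝ) : Matrix ι κ ℝ :=
  LinearMap.toMatrix' (fderiv ℝ g z : (κ → ℝ) →ₗ[ℝ] ι → ℝ)

theorem jacobianMatrix_apply (g : (κ → ℝ) → ι → ℝ) (z : κ → ℝ) (i : ι) (j : κ) :
    jacobianMatrix g z i j = fderiv ℝ g z (Pi.single j 1) i :=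
  LinearMap.toMatrix'_apply _ i j

theorem jacobianMatrix_mulVec (g : (κ → ℝ) → ι → ℝ) (z v : κ → ℝ) :
    jacobianMatrix g z *ᵥ v = fderiv ℝ g z v :=
  LinearMap.toMatrix'_mulVec _ v

end Jacobian

theorem exists_mem_segment_apply_sub_eq_fderiv {E ι : Type*} [NormedAddCommGroup E]
    [NormedSpace ℝ E] [Fintype ι] {g : E → ι → ℝ} (hg : Differentiable ℝ g) (x y : E) (i : ι) :
    ∃ w ∈ segment ℝ x y, g y i - g x i = fderiv ℝ g w (y - x) i :=
  domain_mvt (f := fun p => g p i)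
    (fun p _ => (hasFDerivAt_pi'.1 (hg p).hasFDerivAt i).hasFDerivWithinAt)
    convex_univ (mem_univ x) (mem_univ y)

theorem min_zero_mul_le_mul {a d u v : ℝ} (had : a ≤ d) (hv : 0 ≤ v) (hvu : v ≤ u) :
    min a 0 * u ≤ d * v :=
  calc min a 0 * u ≤ min a 0 * v := mul_le_mul_of_nonpos_left hvu (min_le_right _ _)
    _ ≤ a * v := mul_le_mul_of_nonneg_right (min_le_left _ _) hv
    _ ≤ d * v := mul_le_mul_of_nonneg_right had hv

theorem mul_le_max_zero_mul {b d u v : ℝ} (hdb : d ≤ b) (hv : 0 ≤ v) (hvu : v ≤ u) :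
    d * v ≤ max b 0 * u :=
  calc d * v ≤ b * v := mul_le_mul_of_nonneg_right hdb hv
    _ ≤ max b 0 * v := mul_le_mul_of_nonneg_right (le_max_left _ _) hv
    _ ≤ max b 0 * u := mul_le_mul_of_nonneg_left hvu (le_max_right _ _)

section MulVec

variable {m n : ℕ} {A D : Matrix (Fin m) (Fin n) ℝ} {u v : Fin n → ℝ}

theorem mneg_mulVec_le_mulVec (hAD : ∀ i j, A i j ≤ D i j) (hv : 0 ≤ v) (hvu : v ≤ u) :
    mneg A *ᵥ u ≤ D *ᵥ v :=
  fun i => Finset.sum_le_sum (s := Finset.univ) fun j _ => min_zero_mul_le_mul (hAD i j) (hv j) (hvu j)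

theorem mulVec_le_mpos_mulVec (hDA : ∀ i j, D i j ≤ A i j) (hv : 0 ≤ v) (hvu : v ≤ u) :
    D *ᵥ v ≤ mpos A *ᵥ u :=
  fun i => Finset.sum_le_sum (s := Finset.univ) fun j _ => mul_le_max_zero_mul (hDA i j) (hv j) (hvu j)

end MulVec

theorem stmt1_general {n m : ℕ} (g : (Fin n → ℝ) → (Fin m → ℝ)) (hg : ContDiff ℝ 1 g)
    (x xu : Fin n → ℝ)
    (Jlo Jhi : Matrix (Fin m) (Fin n) ℝ)
    (hJ : ∀ z ∈ Set.Icc x xu, ∀ i j,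
      Jlo i j ≤ fderiv ℝ g z (Pi.single j 1) i ∧ fderiv ℝ g z (Pi.single j 1) i ≤ Jhi i j) :
    ∀ z ∈ Set.Icc x xu,
      g x + (mneg Jlo).mulVec (xu - x) ≤ g z ∧
      g z ≤ g x + (mpos Jhi).mulVec (xu - x) := by
  intro z hz
  have hsub_nonneg : 0 ≤ z - x := sub_nonneg.2 hz.1
  have hsub_le : z - x ≤ xu - x := sub_le_sub_right hz.2 x
  have hmvt : ∀ i, ∃ w ∈ Icc x xu, g z i - g x i = (jacobianMatrix g w *ᵥ (z - x)) i := by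
    intro i
    obtain ⟨w, hw, heq⟩ :=
      exists_mem_segment_apply_sub_eq_fderiv (hg.differentiable one_ne_zero) x z i
    refine ⟨w, Icc_subset_Icc_right hz.2 (segment_subset_Icc hz.1 hw), ?_⟩
    rwa [jacobianMatrix_mulVec]
  constructor <;> intro i <;> obtain ⟨w, hw, heq⟩ := hmvt i
  · have := mneg_mulVec_le_mulVec (A := Jlo) (D := jacobianMatrix g w)
      (fun i j => jacobianMatrix_apply g w i j ▸ (hJ w hw i j).1) hsub_nonneg hsub_le i
    simp only [Pi.add_apply]
    linarith
  · have := mulVec_le_mpos_mulVec (A := Jhi) (D := jacobianMatrix g w)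
      (fun i j => jacobianMatrix_apply g w i j ▸ (hJ w hw i j).2) hsub_nonneg hsub_le i
    simp only [Pi.add_apply]
    linarith

/-- Jacobian-based cornered inclusion function: if `g` is continuously
differentiable and its Jacobian on the box `[x, xu]` satisfies the entrywise bounds
`Jlo ≤ Dg(z) ≤ Jhi`, then for every `z ∈ [x, xu]`,
`g(x) + [Jlo]⁻(xu − x) ≤ g(z) ≤ g(x) + [Jhi]⁺(xu − x)`. -/
theorem stmt1 {n m : ℕ} (g : (Fin n → ℝ) → (Fin m → ℝ)) (hg : ContDiff ℝ 1 g)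
    (x xu : Fin n → ℝ) (hx : x ≤ xu)
    (Jlo Jhi : Matrix (Fin m) (Fin n) ℝ)
    (hJ : ∀ z ∈ Set.Icc x xu, ∀ i j,
      Jlo i j ≤ fderiv ℝ g z (Pi.single j 1) i ∧ fderiv ℝ g z (Pi.single j 1) i ≤ Jhi i j) :
    ∀ z ∈ Set.Icc x xu,
      g x + (mneg Jlo).mulVec (xu - x) ≤ g z ∧
      g z ≤ g x + (mpos Jhi).mulVec (xu - x) :=
  stmt1_general g hg x xu Jlo Jhi hJ
end

section
/- Let g : ℝⁿ → ℝᵐ be continuously differentiable with Jacobian bounds Dg(z) ∈ [J̲_{[x,x̂]}, J̄_{[x,x̂]}] on every box [x, x̂]. Define matrices M̲, M̄ column-by-column by M̲ᵢ = (J̲_{[x, x̂_{[Rᵢ:x]}]})ᵢ and M̄ᵢ = (J̄_{[x, x̂_{[Rᵢ:x]}]})ᵢ, where Rᵢ = {i+1, …, n} and x̂_{[Rᵢ:x]} replaces coordinates in Rᵢ of x̂ by those of x. Then for every z ∈ [x, x̂]: g(x) + [M̲]⁻(x̂ − x) ≤ g(z) ≤ g(x) + [M̄]⁺(x̂ − x).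 Moreover, these mixed bounds are at least as tight as the non-mixed ones: g(x) + [J̲_{[x,x̂]}]⁻(x̂ − x) ≤ g(x) + [M̲]⁻(x̂ − x) and g(x) + [M̄]⁺(x̂ − x) ≤ g(x) + [J̄_{[x,x̂]}]⁺(x̂ − x). -/
/-- `xu_{[Rᵢ:x]}` : replace the coordinates `j ∈ Rᵢ = {i+1,…,n}` of `xu` by those of `x`. -/
def replAfter {n : ℕ} (x xu : Fin n → ℝ) (i : Fin n) : Fin n → ℝ :=
  fun j => if i < j then x j else xu j

/-!
Move from `x` to `z` one coordinate at a time, in the order `1, …, n`. While coordinate `i`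
travels from `xᵢ` to `zᵢ`, the earlier coordinates sit at `z ≤ x̂` and the later ones at `x`,
so the path stays in the nested box `[x, x̂_{[Rᵢ:x]}]`, where the `i`-th partial derivative is
bounded by the `i`-th columns of `M̲` and `M̄`. The mean value theorem bounds each increment, and
since `0 ≤ zᵢ - xᵢ ≤ x̂ᵢ - xᵢ`, only the negative part of the lower bound and the positive part
of the upper bound survive the passage to `x̂ᵢ - xᵢ`. The comparison with the non-mixed bounds is
entrywise monotonicity of `[·]⁻` and `[·]⁺` against the nonnegative vector `x̂ - x`.
-/

open Set Function

theorem sub_mem_Icc_of_fderiv_update_mem_Icc {ι : Type*} [Fintype ι] [DecidableEq ι]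
    {f : (ι → ℝ) → ℝ} (hf : Differentiable ℝ f) (w : ι → ℝ) (i : ι) {a b lo hi : ℝ}
    (hab : a ≤ b) (hbound : ∀ t ∈ Icc a b, fderiv ℝ f (update w i t) (Pi.single i 1) ∈ Icc lo hi) :
    f (update w i b) - f (update w i a) ∈ Icc (lo * (b - a)) (hi * (b - a)) := by
  set φ : ℝ → ℝ := fun t => f (update w i t)
  have hφ : ∀ t, HasDerivAt φ (fderiv ℝ f (update w i t) (Pi.single i 1)) t := fun t =>
    (hf _).hasFDerivAt.comp_hasDerivAt t (hasDerivAt_update w i t)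
  have hcont : ContinuousOn φ (Icc a b) := fun t _ => (hφ t).continuousAt.continuousWithinAt
  have hdiff : DifferentiableOn ℝ φ (interior (Icc a b)) := fun t _ =>
    (hφ t).differentiableAt.differentiableWithinAt
  have hderiv : ∀ t ∈ interior (Icc a b), deriv φ t ∈ Icc lo hi := fun t ht =>
    (hφ t).deriv ▸ hbound t (interior_subset ht)
  have ha := left_mem_Icc.2 hab
  have hb := right_mem_Icc.2 hab
  exact ⟨(convex_Icc a b).mul_sub_le_image_sub_of_le_deriv hcont hdiff
      (fun t ht => (hderiv t ht).1) a ha b hb hab,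
    (convex_Icc a b).image_sub_le_mul_sub_of_deriv_le hcont hdiff
      (fun t ht => (hderiv t ht).2) a ha b hb hab⟩

def stairPoint {n : ℕ} (x z : Fin n → ℝ) (N : ℕ) : Fin n → ℝ :=
  fun j => if (j : ℕ) < N then z j else x j

section stairPoint

variable {n : ℕ} (x z : Fin n → ℝ)

@[simp]
theorem stairPoint_zero : stairPoint x z 0 = x :=
  funext fun _ => if_neg (Nat.not_lt_zero _)

@[simp]
theorem stairPoint_last : stairPoint x z n = z :=
  funext fun j => if_pos j.isLt

theorem update_stairPoint_self (i : Fin n) : update (stairPoint x z i) i (x i) = stairPoint x z i :=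
  update_eq_self_iff.2 (if_neg (lt_irrefl _)).symm

theorem update_stairPoint_eq_stairPoint_succ (i : Fin n) :
    update (stairPoint x z i) i (z i) = stairPoint x z (i + 1) := by
  funext j
  rcases lt_trichotomy j i with h | rfl | h
  · simp [stairPoint, h.ne, Nat.lt_succ_of_lt (Fin.lt_def.1 h), Fin.lt_def.1 h]
  · simp [stairPoint]
  · have hij : (i : ℕ) < j := h
    simp [stairPoint, h.ne', hij.not_gt, Nat.not_lt.2 (Nat.succ_le_of_lt hij)]

theorem sub_eq_sum_stairPoint (f : (Fin n → ℝ) → ℝ) :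
    f z - f x = ∑ i : Fin n, (f (stairPoint x z (i + 1)) - f (stairPoint x z i)) := by
  rw [Fin.sum_univ_eq_sum_range (fun i => f (stairPoint x z (i + 1)) - f (stairPoint x z i)),
    Finset.sum_range_sub (fun N => f (stairPoint x z N)), stairPoint_zero, stairPoint_last]

theorem update_stairPoint_mem_Icc_replAfter {xu : Fin n → ℝ} (hz : z ∈ Icc x xu) (i : Fin n)
    {t : ℝ} (ht : t ∈ Icc (x i) (xu i)) :
    update (stairPoint x z i) i t ∈ Icc x (replAfter x xu i) := by
  refine ⟨fun j => ?_, fun j => ?_⟩ <;> rcases lt_trichotomy j i with h | rfl | h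
  · simp [stairPoint, h.ne, Fin.lt_def.1 h, hz.1 j]
  · simp [ht.1]
  · simp [stairPoint, h.ne', (Fin.lt_def.1 h).not_gt]
  · simp [stairPoint, replAfter, h.ne, Fin.lt_def.1 h, h.not_gt, hz.2 j]
  · simp [replAfter, ht.2]
  · simp [stairPoint, replAfter, h.ne', (Fin.lt_def.1 h).not_gt, h]

end stairPoint

theorem min_zero_mul_le_mul_s2 {lo a c : ℝ} (ha : 0 ≤ a) (hac : a ≤ c) : min lo 0 * c ≤ lo * a :=
  calc min lo 0 * c ≤ min lo 0 * a := mul_le_mul_of_nonpos_left hac (min_le_right _ _)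
    _ ≤ lo * a := mul_le_mul_of_nonneg_right (min_le_left _ _) ha

theorem mul_le_max_zero_mul_s2 {hi a c : ℝ} (ha : 0 ≤ a) (hac : a ≤ c) : hi * a ≤ max hi 0 * c :=
  calc hi * a ≤ max hi 0 * a := mul_le_mul_of_nonneg_right (le_max_left _ _) ha
    _ ≤ max hi 0 * c := mul_le_mul_of_nonneg_left hac (le_max_right _ _)

theorem stairPoint_succ_sub_mem_Icc {n : ℕ} {f : (Fin n → ℝ) → ℝ} (hf : Differentiable ℝ f)
    {x z xu : Fin n → ℝ} (hz : z ∈ Icc x xu) (i : Fin n) {lo hi : ℝ}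
    (hbound : ∀ w ∈ Icc x (replAfter x xu i), fderiv ℝ f w (Pi.single i 1) ∈ Icc lo hi) :
    f (stairPoint x z (i + 1)) - f (stairPoint x z i) ∈
      Icc (min lo 0 * (xu i - x i)) (max hi 0 * (xu i - x i)) := by
  have hxz : x i ≤ z i := hz.1 i
  have hzxu : z i ≤ xu i := hz.2 i
  have hstep := sub_mem_Icc_of_fderiv_update_mem_Icc hf (stairPoint x z i) i hxz
    fun t ht => hbound _ (update_stairPoint_mem_Icc_replAfter x z hz i ⟨ht.1, ht.2.trans hzxu⟩)
  rw [update_stairPoint_self, update_stairPoint_eq_stairPoint_succ] at hstep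
  have hlen : z i - x i ≤ xu i - x i := by linarith
  exact ⟨(min_zero_mul_le_mul_s2 (sub_nonneg.2 hxz) hlen).trans hstep.1,
    hstep.2.trans (mul_le_max_zero_mul_s2 (sub_nonneg.2 hxz) hlen)⟩

theorem sub_mem_Icc_of_fderiv_mem_Icc_replAfter {n : ℕ} {f : (Fin n → ℝ) → ℝ}
    (hf : Differentiable ℝ f) {x z xu : Fin n → ℝ} (hz : z ∈ Icc x xu) (lo hi : Fin n → ℝ)
    (hbound : ∀ i, ∀ w ∈ Icc x (replAfter x xu i),
      fderiv ℝ f w (Pi.single i 1) ∈ Icc (lo i) (hi i)) :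
    f z - f x ∈ Icc (∑ i, min (lo i) 0 * (xu i - x i)) (∑ i, max (hi i) 0 * (xu i - x i)) := by
  have hstep i := stairPoint_succ_sub_mem_Icc hf hz i (hbound i)
  rw [sub_eq_sum_stairPoint x z f]
  exact ⟨Finset.sum_le_sum fun i _ => (hstep i).1, Finset.sum_le_sum fun i _ => (hstep i).2⟩

theorem mneg_mulVec_mono {m n : ℕ} {A B : Matrix (Fin m) (Fin n) ℝ} (hAB : ∀ k j, A k j ≤ B k j)
    {v : Fin n → ℝ} (hv : 0 ≤ v) : (mneg A).mulVec v ≤ (mneg B).mulVec v := fun k =>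
  dotProduct_le_dotProduct_of_nonneg_right (fun j => min_le_min_right 0 (hAB k j)) hv

theorem mpos_mulVec_mono {m n : ℕ} {A B : Matrix (Fin m) (Fin n) ℝ} (hAB : ∀ k j, A k j ≤ B k j)
    {v : Fin n → ℝ} (hv : 0 ≤ v) : (mpos A).mulVec v ≤ (mpos B).mulVec v := fun k =>
  dotProduct_le_dotProduct_of_nonneg_right (fun j => max_le_max_right 0 (hAB k j)) hv

theorem stmt2_general {n m : ℕ} (g : (Fin n → ℝ) → (Fin m → ℝ)) (hg : ContDiff ℝ 1 g)
    (x xu : Fin n → ℝ) (hx : x ≤ xu)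
    (Jlo Jhi : Matrix (Fin m) (Fin n) ℝ)
    (Jloi Jhii : Fin n → Matrix (Fin m) (Fin n) ℝ)
    (hJi : ∀ i : Fin n, ∀ z ∈ Set.Icc x (replAfter x xu i), ∀ k j,
      Jloi i k j ≤ fderiv ℝ g z (Pi.single j 1) k ∧
        fderiv ℝ g z (Pi.single j 1) k ≤ Jhii i k j)
    (hmonolo : ∀ i : Fin n, ∀ k j, Jlo k j ≤ Jloi i k j)
    (hmonohi : ∀ i : Fin n, ∀ k j, Jhii i k j ≤ Jhi k j) :
    (∀ z ∈ Set.Icc x xu,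
      g x + (mneg (fun k i => Jloi i k i)).mulVec (xu - x) ≤ g z ∧
      g z ≤ g x + (mpos (fun k i => Jhii i k i)).mulVec (xu - x)) ∧
    g x + (mneg Jlo).mulVec (xu - x) ≤ g x + (mneg (fun k i => Jloi i k i)).mulVec (xu - x) ∧
    g x + (mpos (fun k i => Jhii i k i)).mulVec (xu - x) ≤ g x + (mpos Jhi).mulVec (xu - x) := by
  have hv : 0 ≤ xu - x := sub_nonneg.2 hx
  refine ⟨fun z hz => ?_, add_le_add_right (mneg_mulVec_mono (fun k i => hmonolo i k i) hv) _,
    add_le_add_right (mpos_mulVec_mono (fun k i => hmonohi i k i) hv) _⟩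
  have hdiff : Differentiable ℝ g := hg.differentiable one_ne_zero
  have hbounds k := sub_mem_Icc_of_fderiv_mem_Icc_replAfter (differentiable_pi.1 hdiff k) hz
    (fun i => Jloi i k i) (fun i => Jhii i k i) fun i w hw => by
      rw [fderiv_apply (hdiff w)]
      exact hJi i w hw k i
  exact ⟨fun k => le_sub_iff_add_le'.1 (hbounds k).1, fun k => sub_le_iff_le_add'.1 (hbounds k).2⟩

/-- Mixed Jacobian-based cornered inclusion function: with Jacobian bounds
`Jlo ≤ Dg ≤ Jhi` on `[x,xu]` and `Jloi i ≤ Dg ≤ Jhii i` on the nested boxes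
`[x, xu_{[Rᵢ:x]}]`, satisfying the columnwise monotonicity `Jlo ≤ Jloi i`, `Jhii i ≤ Jhi`,
the mixed matrices `Mlo, Mhi` (column `i` taken from the nested bounds) give, for every
`z ∈ [x,xu]`, `g(x) + [Mlo]⁻(xu−x) ≤ g(z) ≤ g(x) + [Mhi]⁺(xu−x)`, and these bounds are at
least as tight as the non-mixed ones. -/
theorem stmt2 {n m : ℕ} (g : (Fin n → ℝ) → (Fin m → ℝ)) (hg : ContDiff ℝ 1 g)
    (x xu : Fin n → ℝ) (hx : x ≤ xu)
    (Jlo Jhi : Matrix (Fin m) (Fin n) ℝ)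
    (Jloi Jhii : Fin n → Matrix (Fin m) (Fin n) ℝ)
    (hJ : ∀ z ∈ Set.Icc x xu, ∀ i j,
      Jlo i j ≤ fderiv ℝ g z (Pi.single j 1) i ∧ fderiv ℝ g z (Pi.single j 1) i ≤ Jhi i j)
    (hJi : ∀ i : Fin n, ∀ z ∈ Set.Icc x (replAfter x xu i), ∀ k j,
      Jloi i k j ≤ fderiv ℝ g z (Pi.single j 1) k ∧
        fderiv ℝ g z (Pi.single j 1) k ≤ Jhii i k j)
    (hmonolo : ∀ i : Fin n, ∀ k j, Jlo k j ≤ Jloi i k j)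
    (hmonohi : ∀ i : Fin n, ∀ k j, Jhii i k j ≤ Jhi k j) :
    (∀ z ∈ Set.Icc x xu,
      g x + (mneg (fun k i => Jloi i k i)).mulVec (xu - x) ≤ g z ∧
      g z ≤ g x + (mpos (fun k i => Jhii i k i)).mulVec (xu - x)) ∧
    g x + (mneg Jlo).mulVec (xu - x) ≤ g x + (mneg (fun k i => Jloi i k i)).mulVec (xu - x) ∧
    g x + (mpos (fun k i => Jhii i k i)).mulVec (xu - x) ≤ g x + (mpos Jhi).mulVec (xu - x) :=
  stmt2_general g hg x xu hx Jlo Jhi Jloi Jhii hJi hmonolo hmonohi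
end

section
/- Let g : ℝⁿ → ℝᵐ and let d : T²ⁿ → ℝᵐ be a decomposition function for g, i.e., (a) d(x, x) = g(x) for all x; (b) d(x, y) ≤ d(x̂, y) whenever x ≤ x̂; (c) d(x, ŷ) ≤ d(x, y) whenever y ≤ ŷ. Then the map G(x, x̂) = (d(x, x̂), d(x̂, x)), defined for x ≤ x̂, is a thin monotone inclusion function for g: for all x ≤ z ≤ x̂, d(x, x̂) ≤ g(z) ≤ d(x̂, x); G(x, x) = (g(x), g(x)); and G is monotone with respect to the southeast order. -/
/-- Decomposition-based inclusion functions are thin, monotone inclusion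
functions: if `d` is a decomposition function for `g` — `d(x,x) = g(x)`, increasing in its
first argument, decreasing in its second — then `G(x,xu) = (d x xu, d xu x)` is a thin
monotone (w.r.t. the southeast order) inclusion function for `g`. -/
theorem stmt3 {n m : ℕ} (g : (Fin n → ℝ) → (Fin m → ℝ))
    (d : (Fin n → ℝ) → (Fin n → ℝ) → (Fin m → ℝ))
    (ha : ∀ x, d x x = g x)
    (hb : ∀ x xh y : Fin n → ℝ, x ≤ xh → d x y ≤ d xh y)
    (hc : ∀ x y yh : Fin n → ℝ, y ≤ yh → d x yh ≤ d x y) :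
    -- inclusion function
    (∀ x z xu : Fin n → ℝ, x ≤ z → z ≤ xu → d x xu ≤ g z ∧ g z ≤ d xu x) ∧
    -- thin
    (∀ x : Fin n → ℝ, d x x = g x ∧ d x x = g x) ∧
    -- monotone with respect to the southeast order
    (∀ x xu y yu : Fin n → ℝ, x ≤ y → yu ≤ xu →
      d x xu ≤ d y yu ∧ d yu y ≤ d xu x) := by
  refine ⟨fun x z xu hxz hzxu => ⟨?_, ?_⟩, fun x => ⟨ha x, ha x⟩,
    fun x xu y yu hxy hyx => ⟨le_trans (hb x y xu hxy) (hc y yu xu hyx),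
      le_trans (hb yu xu y hyx) (hc xu x y hxy)⟩⟩
  · calc d x xu ≤ d z xu := hb x z xu hxz
      _ ≤ d z z := hc z z xu hzxu
      _ = g z := ha z
  · calc g z = d z z := (ha z).symm
      _ ≤ d xu z := hb z xu z hzxu
      _ ≤ d xu x := hc xu x z hxz
end

section
/- Let g : ℝⁿ → ℝᵐ be continuous. Define d^tight : T²ⁿ → ℝᵐ componentwise by dᵢ^tight(x, x̂) = min_{z ∈ [x,x̂]} gᵢ(z) if x ≤ x̂, and dᵢ^tight(x, x̂) = max_{z ∈ [x̂,x]} gᵢ(z) if x̂ ≤ x. Then d^tight is a decomposition function for g: d^tight(x, x) = g(x); d^tight(x, y) ≤ d^tight(x̂, y) for x ≤ x̂; and d^tight(x, ŷ) ≤ d^tight(x, y) for y ≤ ŷ (whenever the relevant pairs lie in T²ⁿ). Moreover, (d^tight(x, x̂), d^tight(x̂, x)) equals the minimal inclusion function of g for all x ≤ x̂. -/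
/-!
On a box `[x, y]` the lower endpoint of the tight decomposition function is the minimum of `gᵢ`
and the upper endpoint the maximum, which exist because the box is compact and `g` continuous.
Shrinking the box raises the minimum and lowers the maximum, which gives the monotonicity
whenever both arguments stay on the same side of each other; when they switch sides, the common
point `y` of the two boxes separates them: `min_{[x,y]} gᵢ ≤ gᵢ y ≤ max_{[y,x̂]} gᵢ`.
-/

/-- Membership in `T²ⁿ`: the two vectors are comparable. -/
def Tmem {n : ℕ} (x xh : Fin n → ℝ) : Prop := x ≤ xh ∨ xh ≤ x

open Set

section CompactIcc

variable {α β : Type*} [Preorder α] [TopologicalSpace α] [CompactIccSpace α]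
  [ConditionallyCompleteLinearOrder β] [TopologicalSpace β] [OrderTopology β] {f : α → β}

theorem csInf_image_Icc_le (hf : Continuous f) {a b p : α} (hp : p ∈ Icc a b) :
    sInf (f '' Icc a b) ≤ f p :=
  csInf_le (isCompact_Icc.image hf).bddBelow (mem_image_of_mem f hp)

theorem le_csSup_image_Icc (hf : Continuous f) {a b p : α} (hp : p ∈ Icc a b) :
    f p ≤ sSup (f '' Icc a b) :=
  le_csSup (isCompact_Icc.image hf).bddAbove (mem_image_of_mem f hp)

theorem csInf_image_Icc_le_csInf_image_Icc (hf : Continuous f) {a b a' b' : α} (hab : a ≤ b)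
    (h : Icc a b ⊆ Icc a' b') : sInf (f '' Icc a' b') ≤ sInf (f '' Icc a b) :=
  csInf_le_csInf (isCompact_Icc.image hf).bddBelow ((nonempty_Icc.2 hab).image f) (image_mono h)

theorem csSup_image_Icc_le_csSup_image_Icc (hf : Continuous f) {a b a' b' : α} (hab : a ≤ b)
    (h : Icc a b ⊆ Icc a' b') : sSup (f '' Icc a b) ≤ sSup (f '' Icc a' b') :=
  csSup_le_csSup (isCompact_Icc.image hf).bddAbove ((nonempty_Icc.2 hab).image f) (image_mono h)

end CompactIcc

section TightDecomposition

variable {α ι β : Type*} [PartialOrder α] [ConditionallyCompleteLinearOrder β]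

/-- Only its values at comparable pairs `x ≤ y ∨ y ≤ x` are meaningful. -/
noncomputable def tightDecomp (g : α → ι → β) (x y : α) : ι → β :=
  open Classical in
  if x ≤ y then fun i => sInf ((g · i) '' Icc x y) else fun i => sSup ((g · i) '' Icc y x)

theorem tightDecomp_of_le (g : α → ι → β) {x y : α} (h : x ≤ y) :
    tightDecomp g x y = fun i => sInf ((g · i) '' Icc x y) := by
  simp only [tightDecomp, if_pos h]

theorem tightDecomp_of_ge (g : α → ι → β) {x y : α} (h : y ≤ x) :
    tightDecomp g x y = fun i => sSup ((g · i) '' Icc y x) := by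
  by_cases hxy : x ≤ y
  · obtain rfl := le_antisymm hxy h
    simp only [tightDecomp, le_refl, if_true, Icc_self, image_singleton, csInf_singleton,
      csSup_singleton]
  · simp only [tightDecomp, if_neg hxy]

theorem tightDecomp_self (g : α → ι → β) (x : α) : tightDecomp g x x = g x := by
  funext i
  simp only [tightDecomp_of_le g le_rfl, Icc_self, image_singleton, csInf_singleton]

variable [TopologicalSpace α] [CompactIccSpace α] [TopologicalSpace β] [OrderTopology β]
  {g : α → ι → β}

theorem tightDecomp_mono_left (hg : Continuous g) {x x' y : α} (hx : x ≤ x')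
    (h : x ≤ y ∨ y ≤ x) (h' : x' ≤ y ∨ y ≤ x') : tightDecomp g x y ≤ tightDecomp g x' y := by
  have hgi (i : ι) : Continuous (g · i) := (continuous_apply i).comp hg
  rcases h with hxy | hyx
  · rcases h' with hx'y | hyx'
    · rw [tightDecomp_of_le g hxy, tightDecomp_of_le g hx'y]
      exact fun i => csInf_image_Icc_le_csInf_image_Icc (hgi i) hx'y (Icc_subset_Icc_left hx)
    · rw [tightDecomp_of_le g hxy, tightDecomp_of_ge g hyx']
      exact fun i => (csInf_image_Icc_le (hgi i) ⟨hxy, le_rfl⟩).trans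
        (le_csSup_image_Icc (hgi i) ⟨le_rfl, hyx'⟩)
  · rw [tightDecomp_of_ge g hyx, tightDecomp_of_ge g (hyx.trans hx)]
    exact fun i => csSup_image_Icc_le_csSup_image_Icc (hgi i) hyx (Icc_subset_Icc_right hx)

theorem tightDecomp_anti_right (hg : Continuous g) {x y y' : α} (hy : y ≤ y')
    (h : x ≤ y ∨ y ≤ x) (h' : x ≤ y' ∨ y' ≤ x) : tightDecomp g x y' ≤ tightDecomp g x y := by
  have hgi (i : ι) : Continuous (g · i) := (continuous_apply i).comp hg
  rcases h with hxy | hyx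
  · rw [tightDecomp_of_le g hxy, tightDecomp_of_le g (hxy.trans hy)]
    exact fun i => csInf_image_Icc_le_csInf_image_Icc (hgi i) hxy (Icc_subset_Icc_right hy)
  · rcases h' with hxy' | hy'x
    · rw [tightDecomp_of_le g hxy', tightDecomp_of_ge g hyx]
      exact fun i => (csInf_image_Icc_le (hgi i) ⟨le_rfl, hxy'⟩).trans
        (le_csSup_image_Icc (hgi i) ⟨hyx, le_rfl⟩)
    · rw [tightDecomp_of_ge g hy'x, tightDecomp_of_ge g hyx]
      exact fun i => csSup_image_Icc_le_csSup_image_Icc (hgi i) hy'x (Icc_subset_Icc_left hy)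

end TightDecomposition

/-- The tight decomposition function: for continuous `g`, the map `dt` defined
componentwise by `dtᵢ(x,xh) = min_{z∈[x,xh]} gᵢ z` if `x ≤ xh` and `max_{z∈[xh,x]} gᵢ z` if
`xh ≤ x` is a decomposition function for `g`, and `(dt x xh, dt xh x)` coincides with the
minimal inclusion function of `g` for all `x ≤ xh`. -/
theorem stmt4 {n m : ℕ} (g : (Fin n → ℝ) → (Fin m → ℝ)) (hg : Continuous g)
    (dt : (Fin n → ℝ) → (Fin n → ℝ) → (Fin m → ℝ))
    (hdef_lo : ∀ x xh : Fin n → ℝ, x ≤ xh →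
      dt x xh = fun i => sInf ((fun z => g z i) '' Set.Icc x xh))
    (hdef_hi : ∀ x xh : Fin n → ℝ, xh ≤ x →
      dt x xh = fun i => sSup ((fun z => g z i) '' Set.Icc xh x)) :
    -- (a) agrees with g on the diagonal
    (∀ x : Fin n → ℝ, dt x x = g x) ∧
    -- (b) increasing in the first argument (whenever the relevant pairs lie in T²ⁿ)
    (∀ x xh y : Fin n → ℝ, x ≤ xh → Tmem x y → Tmem xh y → dt x y ≤ dt xh y) ∧
    -- (c) decreasing in the second argument (whenever the relevant pairs lie in T²ⁿ)
    (∀ x y yh : Fin n → ℝ, y ≤ yh → Tmem x y → Tmem x yh → dt x yh ≤ dt x y) ∧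
    -- equality with the minimal inclusion function
    (∀ x xh : Fin n → ℝ, x ≤ xh →
      dt x xh = (fun i => sInf ((fun z => g z i) '' Set.Icc x xh)) ∧
      dt xh x = (fun i => sSup ((fun z => g z i) '' Set.Icc x xh))) := by
  have hdt : ∀ x y, Tmem x y → dt x y = tightDecomp g x y := by
    rintro x y (hxy | hyx)
    · rw [hdef_lo x y hxy, tightDecomp_of_le g hxy]
    · rw [hdef_hi x y hyx, tightDecomp_of_ge g hyx]
  refine ⟨fun x => ?_, fun x xh y hx h h' => ?_, fun x y yh hy h h' => ?_,
    fun x xh hx => ⟨hdef_lo x xh hx, hdef_hi xh x hx⟩⟩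
  · rw [hdt x x (Or.inl le_rfl), tightDecomp_self]
  · rw [hdt x y h, hdt xh y h']
    exact tightDecomp_mono_left hg hx h h'
  · rw [hdt x y h, hdt x yh h']
    exact tightDecomp_anti_right hg hy h h'
end

section
/- Let f(z, ξ, η) = Az + Bξ + Dη be linear, and suppose the neural network N : ℝⁿ → ℝᵖ satisfies affine bounds C̲x + d̲ ≤ N(x) ≤ C̄x + d̄ for all x ∈ [y, ŷ]. Then for all [x, x̂] ⊆ [y, ŷ], z ∈ [x, x̂], and η ∈ [w, ŵ], the closed-loop map f^c(z, η) = Az + BN(z) + Dη satisfies: [A + B⁺C̲ + B⁻C̄]⁺ x + [A + B⁺C̲ + B⁻C̄]⁻ x̂ + D⁺w + D⁻ŵ + B⁺d̲ + B⁻d̄ ≤ f^c(z, η) ≤ [A + B⁺C̄ + B⁻C̲]⁻ x + [A + B⁺C̄ + B⁻C̲]⁺ x̂ + D⁻w + D⁺ŵ + B⁻d̲ + B⁺d̄. -/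
lemma interval_mulVec {m n : ℕ} (M : Matrix (Fin m) (Fin n) ℝ) {x z xh : Fin n → ℝ}
    (h1 : x ≤ z) (h2 : z ≤ xh) :
    ((mpos M).mulVec x + (mneg M).mulVec xh ≤ M.mulVec z) ∧
    (M.mulVec z ≤ (mneg M).mulVec x + (mpos M).mulVec xh) := by
  constructor <;> intro i <;>
    simp only [Pi.add_apply, Matrix.mulVec, dotProduct,
      ← Finset.sum_add_distrib] <;>
    apply Finset.sum_le_sum <;> intro j _ <;>
  · have hp : (0:ℝ) ≤ mpos M i j := le_max_right _ _
    have hn : mneg M i j ≤ 0 := min_le_right _ _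
    have hs : mpos M i j + mneg M i j = M i j := by
      simp [mpos, mneg, max_add_min]
    have e : M i j * z j = mpos M i j * z j + mneg M i j * z j := by
      rw [← hs]; ring
    have t1 : mpos M i j * x j ≤ mpos M i j * z j :=
      mul_le_mul_of_nonneg_left (h1 j) hp
    have t2 : mpos M i j * z j ≤ mpos M i j * xh j :=
      mul_le_mul_of_nonneg_left (h2 j) hp
    have t3 : mneg M i j * xh j ≤ mneg M i j * z j :=
      mul_le_mul_of_nonpos_left (h2 j) hn
    have t4 : mneg M i j * z j ≤ mneg M i j * x j :=
      mul_le_mul_of_nonpos_left (h1 j) hn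
    linarith

/-- Linear closed-loop interaction-based bounds: if the network `N` satisfies
affine bounds `Clo z + dlo ≤ N z ≤ Chi z + dhi` on `[y,yh]`, then for all
`[x,xh] ⊆ [y,yh]`, `z ∈ [x,xh]`, `η ∈ [w,wh]`, the closed-loop map
`f^c(z,η) = Az + B N(z) + Dη` is bounded below and above by the stated expressions. -/
theorem stmt12 {n p q : ℕ}
    (A : Matrix (Fin n) (Fin n) ℝ) (B : Matrix (Fin n) (Fin p) ℝ)
    (D : Matrix (Fin n) (Fin q) ℝ)
    (N : (Fin n → ℝ) → (Fin p → ℝ))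
    (Clo Chi : Matrix (Fin p) (Fin n) ℝ) (dlo dhi : Fin p → ℝ)
    (y yh : Fin n → ℝ)
    (hN : ∀ z ∈ Set.Icc y yh, Clo.mulVec z + dlo ≤ N z ∧ N z ≤ Chi.mulVec z + dhi)
    (x xh : Fin n → ℝ) (hsub : Set.Icc x xh ⊆ Set.Icc y yh) (hx : x ≤ xh)
    (w wh : Fin q → ℝ) (hw : w ≤ wh) :
    ∀ z ∈ Set.Icc x xh, ∀ η ∈ Set.Icc w wh,
      (mpos (A + mpos B * Clo + mneg B * Chi)).mulVec x +
        (mneg (A + mpos B * Clo + mneg B * Chi)).mulVec xh +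
        (mpos D).mulVec w + (mneg D).mulVec wh +
        (mpos B).mulVec dlo + (mneg B).mulVec dhi
      ≤ A.mulVec z + B.mulVec (N z) + D.mulVec η ∧
      A.mulVec z + B.mulVec (N z) + D.mulVec η ≤
        (mneg (A + mpos B * Chi + mneg B * Clo)).mulVec x +
        (mpos (A + mpos B * Chi + mneg B * Clo)).mulVec xh +
        (mneg D).mulVec w + (mpos D).mulVec wh +
        (mneg B).mulVec dlo + (mpos B).mulVec dhi := by
  intro z hz η hη
  obtain ⟨hN1, hN2⟩ := hN z (hsub hz)
  have hB := interval_mulVec B hN1 hN2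
  have hD := interval_mulVec D hη.1 hη.2
  have hM1 := interval_mulVec (A + mpos B * Clo + mneg B * Chi) hz.1 hz.2
  have hM2 := interval_mulVec (A + mpos B * Chi + mneg B * Clo) hz.1 hz.2
  constructor <;> intro i
  · have h1 := hM1.1 i
    have h2 := hB.1 i
    have h3 := hD.1 i
    simp only [Matrix.add_mulVec, ← Matrix.mulVec_mulVec, Matrix.mulVec_add,
      Pi.add_apply] at h1 h2 h3 ⊢
    linarith
  · have h1 := hM2.2 i
    have h2 := hB.2 i
    have h3 := hD.2 i
    simp only [Matrix.add_mulVec, ← Matrix.mulVec_mulVec, Matrix.mulVec_add,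
      Pi.add_apply] at h1 h2 h3 ⊢
    linarith
end

section
/- Let P be a matrix with J̲ ≤ P ≤ J̄ entrywise, and let v ≥ 0 be a nonnegative vector satisfying C̲z + d̲ − u ≤ v ≤ C̄z + d̄ − u for some z, u and matrices/vectors C̲, C̄, d̲, d̄. Then Pv ≥ [J̲]⁺(C̲z + d̲ − u) + [J̲]⁻(C̄z + d̄ − u). -/
/-- if `Jlo ≤ P ≤ Jhi` entrywise and `0 ≤ v` with
`Clo z + dlo − u ≤ v ≤ Chi z + dhi − u`, then
`P v ≥ [Jlo]⁺(Clo z + dlo − u) + [Jlo]⁻(Chi z + dhi − u)`. -/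
theorem stmt14 {m p n : ℕ}
    (P Jlo Jhi : Matrix (Fin m) (Fin p) ℝ)
    (hPlo : ∀ i j, Jlo i j ≤ P i j) (hPhi : ∀ i j, P i j ≤ Jhi i j)
    (Clo Chi : Matrix (Fin p) (Fin n) ℝ) (dlo dhi : Fin p → ℝ)
    (z : Fin n → ℝ) (u : Fin p → ℝ) (v : Fin p → ℝ)
    (hv0 : 0 ≤ v)
    (hvlo : Clo.mulVec z + dlo - u ≤ v)
    (hvhi : v ≤ Chi.mulVec z + dhi - u) :
    (mpos Jlo).mulVec (Clo.mulVec z + dlo - u) +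
      (mneg Jlo).mulVec (Chi.mulVec z + dhi - u) ≤ P.mulVec v := by
  intro i
  simp only [Pi.add_apply, Matrix.mulVec, dotProduct]
  rw [← Finset.sum_add_distrib]
  calc ∑ j, (mpos Jlo i j * (Clo.mulVec z + dlo - u) j
        + mneg Jlo i j * (Chi.mulVec z + dhi - u) j)
      ≤ ∑ j, Jlo i j * v j := by
        apply Finset.sum_le_sum
        intro j _
        have h1 : mpos Jlo i j * (Clo.mulVec z + dlo - u) j ≤ mpos Jlo i j * v j :=
          mul_le_mul_of_nonneg_left (hvlo j) (le_max_right _ _)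
        have h2 : mneg Jlo i j * (Chi.mulVec z + dhi - u) j ≤ mneg Jlo i j * v j :=
          mul_le_mul_of_nonpos_left (hvhi j) (min_le_right _ _)
        have hmn : mpos Jlo i j + mneg Jlo i j = Jlo i j := by
          simpa [mpos, mneg] using max_add_min (Jlo i j) 0
        rw [← hmn, add_mul]; linarith
    _ ≤ ∑ j, P i j * v j := by
        apply Finset.sum_le_sum
        intro j _
        exact mul_le_mul_of_nonneg_right (hPlo i j) (hv0 j)
end

section
/- Consider the continuous-time linear closed-loop comparison: let A, B, C̲, C̄, D, d̲, d̄ be fixed matrices/vectors, and define two vector fields on ℝ²ⁿ: F^con(x, x̂) = (([A]^M + [B⁺C̲ + B⁻C̄]^M)x + ([A]^nM + [B⁺C̲ + B⁻C̄]^nM)x̂ + c̲, ([A]^nM + [B⁺C̄ + B⁻C̲]^nM)x + ([A]^M + [B⁺C̄ + B⁻C̲]^M)x̂ + c̄) and F^act(x, x̂) = ([A + B⁺C̲ + B⁻C̄]^M x + [A + B⁺C̲ + B⁻C̄]^nM x̂ + c̲, [A + B⁺C̄ + B⁻C̲]^nM x + [A + B⁺C̄ + B⁻C̲]^M x̂ +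 c̄) for fixed offsets c̲, c̄. Then for every x ≤ x̂: F^con(x, x̂) ≤_SE F^act(x, x̂), i.e., the lower component of F^con is ≤ that of F^act and the upper component of F^con is ≥ that of F^act. -/
/-- Metzler part of a square matrix. -/
noncomputable def metzler {n : ℕ} (A : Matrix (Fin n) (Fin n) ℝ) :
    Matrix (Fin n) (Fin n) ℝ :=
  fun i j => if 0 ≤ A i j ∨ i = j then A i j else 0

/-- Non-Metzler part of a square matrix. -/
noncomputable def nonMetzler {n : ℕ} (A : Matrix (Fin n) (Fin n) ℝ) :
    Matrix (Fin n) (Fin n) ℝ :=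
  A - metzler A

/-!
With `C = B⁺C̲ + B⁻C̄` (resp. `B⁺C̄ + B⁻C̲`), both fields split `A + C` as a Metzler-like part
`K` plus the rest, with `K = [A]^M + [C]^M` for `F^con` and `K = [A + C]^M` for `F^act`.
A component then reads `(A + C) xh - K (xh - x)` (lower) or `(A + C) x + K (xh - x)` (upper),
which is monotone in `K` because `xh - x ≥ 0`; and `[A + C]^M ≤ [A]^M + [C]^M` entrywise.
-/

namespace Matrix

variable {m n R : Type*} [Fintype n] [Ring R] [PartialOrder R] [IsOrderedRing R]

lemma mulVec_le_mulVec_of_le_of_nonneg {M N : Matrix m n R} (hMN : ∀ i j, M i j ≤ N i j)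
    {v : n → R} (hv : 0 ≤ v) : M *ᵥ v ≤ N *ᵥ v :=
  fun i => dotProduct_le_dotProduct_of_nonneg_right (hMN i) hv

variable {M N S : Matrix m n R} {x xh : n → R}

lemma mulVec_add_sub_mulVec_le (hMN : ∀ i j, M i j ≤ N i j) (hx : x ≤ xh) :
    N *ᵥ x + (S - N) *ᵥ xh ≤ M *ᵥ x + (S - M) *ᵥ xh := by
  have key (K : Matrix m n R) : K *ᵥ x + (S - K) *ᵥ xh = S *ᵥ xh - K *ᵥ (xh - x) := by
    simp only [sub_mulVec, mulVec_sub]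
    abel
  rw [key, key]
  exact sub_le_sub_left (mulVec_le_mulVec_of_le_of_nonneg hMN (sub_nonneg.2 hx)) _

lemma sub_mulVec_add_mulVec_le (hMN : ∀ i j, M i j ≤ N i j) (hx : x ≤ xh) :
    (S - M) *ᵥ x + M *ᵥ xh ≤ (S - N) *ᵥ x + N *ᵥ xh := by
  have key (K : Matrix m n R) : (S - K) *ᵥ x + K *ᵥ xh = S *ᵥ x + K *ᵥ (xh - x) := by
    simp only [sub_mulVec, mulVec_sub]
    abel
  rw [key, key]
  exact add_le_add_right (mulVec_le_mulVec_of_le_of_nonneg hMN (sub_nonneg.2 hx)) _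

end Matrix

open Matrix

lemma metzler_add_apply_le {n : ℕ} (A C : Matrix (Fin n) (Fin n) ℝ) (i j : Fin n) :
    metzler (A + C) i j ≤ (metzler A + metzler C) i j := by
  by_cases h : i = j
  · simp [metzler, h]
  · simp only [Matrix.add_apply, metzler, h, or_false]
    split_ifs <;> linarith

lemma nonMetzler_add_nonMetzler {n : ℕ} (A C : Matrix (Fin n) (Fin n) ℝ) :
    nonMetzler A + nonMetzler C = A + C - (metzler A + metzler C) := by
  simp only [nonMetzler]
  abel

/-- Interconnection-based vs. interaction-based embedding fields, linear case:
for every `x ≤ xh`, `F^con(x,xh) ≤_SE F^act(x,xh)`: the lower component of `F^con` is `≤`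
that of `F^act` and the upper component of `F^con` is `≥` that of `F^act`. -/
theorem stmt17 {n p : ℕ}
    (A : Matrix (Fin n) (Fin n) ℝ) (B : Matrix (Fin n) (Fin p) ℝ)
    (Clo Chi : Matrix (Fin p) (Fin n) ℝ) (clo chi : Fin n → ℝ)
    (x xh : Fin n → ℝ) (hx : x ≤ xh) :
    -- lower components
    ((metzler A + metzler (mpos B * Clo + mneg B * Chi)).mulVec x +
      (nonMetzler A + nonMetzler (mpos B * Clo + mneg B * Chi)).mulVec xh + clo ≤
      (metzler (A + mpos B * Clo + mneg B * Chi)).mulVec x +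
      (nonMetzler (A + mpos B * Clo + mneg B * Chi)).mulVec xh + clo) ∧
    -- upper components
    ((nonMetzler (A + mpos B * Chi + mneg B * Clo)).mulVec x +
      (metzler (A + mpos B * Chi + mneg B * Clo)).mulVec xh + chi ≤
      (nonMetzler A + nonMetzler (mpos B * Chi + mneg B * Clo)).mulVec x +
      (metzler A + metzler (mpos B * Chi + mneg B * Clo)).mulVec xh + chi) := by
  rw [add_assoc A, add_assoc A, nonMetzler_add_nonMetzler, nonMetzler_add_nonMetzler]
  exact ⟨add_le_add_left (mulVec_add_sub_mulVec_le (metzler_add_apply_le _ _) hx) clo,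
    add_le_add_left (sub_mulVec_add_mulVec_le (metzler_add_apply_le _ _) hx) chi⟩
end
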